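/- arXiv:1401.4492 — 6 statements merged into one kernel-verified Lean document; each statement's English description precedes it below -/
import Mathlib

section
/- QPTL does not subsume HyperLTL: there is no closed QPTL formula ψ such that for every Kripke structure K (over a set of atomic propositions containing a), K satisfies ψ (in QPTL) if and only if K satisfies the HyperLTL formula ∃π. ○a_π. -/
/-! # QPTL does not subsume HyperLTL

There is no closed QPTL formula ψ such that for every Kripke structure K (over a set of
atomic propositions containing `a`), K satisfies ψ in QPTL iff K satisfies the HyperLTL
formula `∃π. ○ a_π`. -/

/-- Traces: infinite sequences of valuations over the atomic propositions. -/
abbrev Trace (AP : Type) := ℕ → Set AP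

/-- The suffix `t[i,∞]` of a trace. -/
def Trace.drop {AP : Type} (t : Trace AP) (i : ℕ) : Trace AP := fun j => t (i + j)

/-- Kripke structures over atomic propositions `AP` with states `S`. -/
structure Kripke (AP : Type) (S : Type) where
  init : S
  next : S → Set S
  next_nonempty : ∀ s, (next s).Nonempty
  label : S → Set AP

/-- The set of traces of a Kripke structure. -/
def Kripke.Traces {AP S : Type} (K : Kripke AP S) : Set (Trace AP) :=
  { t | ∃ r : ℕ → S, r 0 = K.init ∧ (∀ i, r (i + 1) ∈ K.next (r i)) ∧
        ∀ i, t i = K.label (r i) }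

/-- Syntax of HyperLTL; trace variables are natural numbers. -/
inductive HyperLTL (AP : Type) : Type where
  | atom : AP → ℕ → HyperLTL AP
  | neg  : HyperLTL AP → HyperLTL AP
  | or   : HyperLTL AP → HyperLTL AP → HyperLTL AP
  | next : HyperLTL AP → HyperLTL AP
  | untl : HyperLTL AP → HyperLTL AP → HyperLTL AP
  | ex   : ℕ → HyperLTL AP → HyperLTL AP
  | all  : ℕ → HyperLTL AP → HyperLTL AP

namespace HyperLTL

variable {AP : Type}

/-- Partial trace assignments. -/
abbrev Asgn (AP : Type) := ℕ → Option (Trace AP)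

/-- The empty trace assignment. -/
def Asgn.empty : Asgn AP := fun _ => none

/-- The suffix `Π[i,∞]` of a trace assignment. -/
def Asgn.drop (Pa : Asgn AP) (i : ℕ) : Asgn AP := fun π => (Pa π).map (fun t => t.drop i)

/-- Updating a trace assignment: `Π[π ↦ t]`. -/
def Asgn.update (Pa : Asgn AP) (π : ℕ) (t : Trace AP) : Asgn AP :=
  fun π' => if π' = π then some t else Pa π'

/-- The HyperLTL validity judgment `Π ⊨_T φ`. -/
def sat (T : Set (Trace AP)) : Asgn AP → HyperLTL AP → Prop
  | Pa, atom a π => ∃ t, Pa π = some t ∧ a ∈ t 0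
  | Pa, neg φ => ¬ sat T Pa φ
  | Pa, or φ ψ => sat T Pa φ ∨ sat T Pa ψ
  | Pa, next φ => sat T (Pa.drop 1) φ
  | Pa, untl φ ψ => ∃ i, sat T (Pa.drop i) ψ ∧ ∀ j < i, sat T (Pa.drop j) φ
  | Pa, ex π φ => ∃ t ∈ T, sat T (Pa.update π t) φ
  | Pa, all π φ => ∀ t ∈ T, sat T (Pa.update π t) φ

/-- A set of traces satisfies a (closed) formula if the empty assignment satisfies it. -/
def satisfies (T : Set (Trace AP)) (φ : HyperLTL AP) : Prop := sat T Asgn.empty φ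

end HyperLTL

/-- Syntax of QPTL. -/
inductive QPTL (AP : Type) : Type where
  | atom : AP → QPTL AP
  | neg  : QPTL AP → QPTL AP
  | or   : QPTL AP → QPTL AP → QPTL AP
  | next : QPTL AP → QPTL AP
  | ev   : QPTL AP → QPTL AP
  | qex  : AP → QPTL AP → QPTL AP

namespace QPTL

variable {AP : Type}

/-- QPTL satisfaction over a single trace. -/
def sat : Trace AP → QPTL AP → Prop
  | t, atom a => a ∈ t 0
  | t, neg φ => ¬ sat t φ
  | t, or φ ψ => sat t φ ∨ sat t ψ
  | t, next φ => sat (t.drop 1) φ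
  | t, ev φ => ∃ i, sat (t.drop i) φ
  | t, qex a φ => ∃ t' : Trace AP, (∀ i b, b ≠ a → (b ∈ t' i ↔ b ∈ t i)) ∧ sat t' φ

/-- Free atomic propositions of a QPTL formula. -/
def free : QPTL AP → Set AP
  | atom a => {a}
  | neg φ => free φ
  | or φ ψ => free φ ∪ free ψ
  | next φ => free φ
  | ev φ => free φ
  | qex a φ => free φ \ {a}

/-- A QPTL formula is closed if all its atomic propositions are bound. -/
def Closed (φ : QPTL AP) : Prop := free φ = ∅

end QPTL

/-- Satisfaction of a QPTL formula depends only on the free atomic propositions. -/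
lemma QPTL.sat_congr_aux {AP : Type} (φ : QPTL AP) :
    ∀ t t' : Trace AP, (∀ i b, b ∈ φ.free → (b ∈ t i ↔ b ∈ t' i)) →
      QPTL.sat t φ → QPTL.sat t' φ := by
  induction φ with
  | atom a =>
    intro t t' h hs
    exact (h 0 a rfl).mp hs
  | neg φ ih =>
    intro t t' h hs
    intro hc
    exact hs (ih t' t (fun i b hb => (h i b hb).symm) hc)
  | or φ ψ ihφ ihψ =>
    intro t t' h hs
    rcases hs with hs | hs
    · exact Or.inl (ihφ t t' (fun i b hb => h i b (Or.inl hb)) hs)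
    · exact Or.inr (ihψ t t' (fun i b hb => h i b (Or.inr hb)) hs)
  | next φ ih =>
    intro t t' h hs
    exact ih (t.drop 1) (t'.drop 1) (fun i b hb => h (1 + i) b hb) hs
  | ev φ ih =>
    intro t t' h hs
    obtain ⟨i, hi⟩ := hs
    exact ⟨i, ih (t.drop i) (t'.drop i) (fun j b hb => h (i + j) b hb) hi⟩
  | qex a φ ih =>
    intro t t' h hs
    obtain ⟨s, hag, hsat⟩ := hs
    refine ⟨fun i => {b | (b = a ∧ b ∈ s i) ∨ (b ≠ a ∧ b ∈ t' i)}, ?_, ?_⟩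
    · intro i b hb
      simp only [Set.mem_setOf_eq]
      constructor
      · rintro (⟨hba, _⟩ | ⟨_, hbt⟩)
        · exact absurd hba hb
        · exact hbt
      · intro hbt; exact Or.inr ⟨hb, hbt⟩
    · apply ih s _ _ hsat
      intro i b hb
      simp only [Set.mem_setOf_eq]
      by_cases hba : b = a
      · constructor
        · intro hbs; exact Or.inl ⟨hba, hbs⟩
        · rintro (⟨_, hbs⟩ | ⟨hne, _⟩)
          · exact hbs
          · exact absurd hba hne
      · have h1 : b ∈ s i ↔ b ∈ t i := hag i b hba
        have h2 : b ∈ t i ↔ b ∈ t' i := h i b ⟨hb, hba⟩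
        constructor
        · intro hbs; exact Or.inr ⟨hba, h2.mp (h1.mp hbs)⟩
        · rintro (⟨hba', _⟩ | ⟨_, hbt⟩)
          · exact absurd hba' hba
          · exact h1.mpr (h2.mpr hbt)

/-- A closed QPTL formula has the same truth value on all traces. -/
lemma QPTL.sat_const {AP : Type} (ψ : QPTL AP) (hc : ψ.Closed) (t t' : Trace AP)
    (h : QPTL.sat t ψ) : QPTL.sat t' ψ := by
  apply QPTL.sat_congr_aux ψ t t' _ h
  intro i b hb
  rw [hc] at hb
  exact absurd hb (Set.notMem_empty b)

/-- **QPTL does not subsume HyperLTL**: there is no closed QPTL formula ψ such that for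
every Kripke structure K over a set of atomic propositions containing `a`, K satisfies ψ
(in QPTL, i.e. every trace of K satisfies ψ) if and only if K satisfies the HyperLTL
formula `∃π. ○ a_π`. -/
theorem qptl_does_not_subsume_hyperltl (AP : Type) (a : AP) :
    ¬ ∃ ψ : QPTL AP, ψ.Closed ∧
      ∀ (S : Type) (K : Kripke AP S),
        (∀ t ∈ K.Traces, QPTL.sat t ψ) ↔
          HyperLTL.satisfies K.Traces (HyperLTL.ex 0 (HyperLTL.next (HyperLTL.atom a 0))) := by
  rintro ⟨ψ, hc, hspec⟩
  -- K1: single state always labeled {a}; K2: single state labeled ∅.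
  set K1 : Kripke AP Unit :=
    ⟨(), fun _ => {()}, fun _ => ⟨(), rfl⟩, fun _ => {a}⟩ with hK1
  set K2 : Kripke AP Unit :=
    ⟨(), fun _ => {()}, fun _ => ⟨(), rfl⟩, fun _ => (∅ : Set AP)⟩ with hK2
  have ht1 : (fun _ : ℕ => ({a} : Set AP)) ∈ K1.Traces :=
    ⟨fun _ => (), rfl, fun _ => rfl, fun _ => rfl⟩
  have ht2 : (fun _ : ℕ => (∅ : Set AP)) ∈ K2.Traces :=
    ⟨fun _ => (), rfl, fun _ => rfl, fun _ => rfl⟩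
  -- K1 satisfies the HyperLTL formula
  have hH1 : HyperLTL.satisfies K1.Traces
      (HyperLTL.ex 0 (HyperLTL.next (HyperLTL.atom a 0))) := by
    refine ⟨_, ht1, ?_⟩
    refine ⟨Trace.drop (fun _ : ℕ => ({a} : Set AP)) 1, ?_, rfl⟩
    simp [HyperLTL.Asgn.drop, HyperLTL.Asgn.update]
  -- K2 does not satisfy it
  have hH2 : ¬ HyperLTL.satisfies K2.Traces
      (HyperLTL.ex 0 (HyperLTL.next (HyperLTL.atom a 0))) := by
    rintro ⟨t, ⟨r, _, _, hr⟩, ⟨s, hs, has⟩⟩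
    have : s = t.drop 1 := by
      simp only [HyperLTL.Asgn.drop, HyperLTL.Asgn.update] at hs
      simpa using hs.symm
    subst this
    have : t 1 = (∅ : Set AP) := hr 1
    simp [Trace.drop, this] at has
  -- Closed ψ is constant, contradiction
  have h1 := (hspec Unit K1).mpr hH1
  have h2 : ∀ t ∈ K2.Traces, QPTL.sat t ψ := by
    intro t _
    exact QPTL.sat_const ψ hc _ t (h1 _ ht1)
  exact hH2 ((hspec Unit K2).mp h2)
end

section
/- HyperLTL is the prenex fragment of HyperCTL*: a closed HyperCTL* formula φ in prenex form (a sequence of path quantifiers followed by a quantifier-free formula) is satisfied in HyperCTL* by a Kripke structure K if and only if φ, read as a HyperLTL formula, is satisfied in HyperLTL by the trace set Traces(K). -/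
/-- Paths of a Kripke structure starting in state `s`. -/
def Kripke.Paths {AP S : Type} (K : Kripke AP S) (s : S) : Set (ℕ → S × Set AP) :=
  { p | (p 0).1 = s ∧ (∀ i, (p (i + 1)).1 ∈ K.next (p i).1) ∧ ∀ i, (p i).2 = K.label (p i).1 }

/-- Quantifier-free formulas (shared by HyperLTL and HyperCTL*). -/
inductive QF (AP : Type) : Type where
  | atom : AP → ℕ → QF AP
  | neg  : QF AP → QF AP
  | or   : QF AP → QF AP → QF AP
  | next : QF AP → QF AP
  | untl : QF AP → QF AP → QF AP

/-- Formulas in prenex form: a sequence of quantifiers followed by a quantifier-free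
formula. These are exactly the HyperLTL formulas. -/
inductive Prenex (AP : Type) : Type where
  | qf  : QF AP → Prenex AP
  | ex  : ℕ → Prenex AP → Prenex AP
  | all : ℕ → Prenex AP → Prenex AP

namespace QF

variable {AP : Type}

/-- Free trace variables of a quantifier-free formula. -/
def free : QF AP → Set ℕ
  | atom _ π => {π}
  | neg φ => free φ
  | or φ ψ => free φ ∪ free ψ
  | next φ => free φ
  | untl φ ψ => free φ ∪ free ψ

/-- Partial trace assignments. -/
abbrev Asgn (AP : Type) := ℕ → Option (Trace AP)

/-- The empty trace assignment. -/
def Asgn.empty : Asgn AP := fun _ => none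

/-- The suffix `Π[i,∞]` of a trace assignment. -/
def Asgn.drop (Pa : Asgn AP) (i : ℕ) : Asgn AP := fun π => (Pa π).map (fun t => t.drop i)

/-- Updating a trace assignment: `Π[π ↦ t]`. -/
def Asgn.update (Pa : Asgn AP) (π : ℕ) (t : Trace AP) : Asgn AP :=
  fun π' => if π' = π then some t else Pa π'

/-- HyperLTL satisfaction of quantifier-free formulas by a trace assignment. -/
def sat : Asgn AP → QF AP → Prop
  | Pa, atom a π => ∃ t, Pa π = some t ∧ a ∈ t 0
  | Pa, neg φ => ¬ sat Pa φ
  | Pa, or φ ψ => sat Pa φ ∨ sat Pa ψ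
  | Pa, next φ => sat (Pa.drop 1) φ
  | Pa, untl φ ψ => ∃ i, sat (Pa.drop i) ψ ∧ ∀ j < i, sat (Pa.drop j) φ

end QF

namespace Prenex

variable {AP : Type}

/-- Free trace variables of a prenex formula. -/
def free : Prenex AP → Set ℕ
  | qf φ => φ.free
  | ex π φ => free φ \ {π}
  | all π φ => free φ \ {π}

/-- A prenex formula is closed if it has no free trace variables. -/
def Closed (φ : Prenex AP) : Prop := free φ = ∅

/-- The HyperLTL validity judgment `Π ⊨_T φ` for prenex formulas. -/
def sat (T : Set (Trace AP)) : QF.Asgn AP → Prenex AP → Prop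
  | Pa, qf φ => QF.sat Pa φ
  | Pa, ex π φ => ∃ t ∈ T, sat T (Pa.update π t) φ
  | Pa, all π φ => ∀ t ∈ T, sat T (Pa.update π t) φ

/-- A set of traces satisfies a closed prenex formula (in HyperLTL) if the empty
assignment satisfies it. -/
def satisfies (T : Set (Trace AP)) (φ : Prenex AP) : Prop := sat T QF.Asgn.empty φ

end Prenex

/-- Syntax of HyperCTL*; `∀π.φ` is syntactic sugar for `¬∃π.¬φ`. -/
inductive HCTL (AP : Type) : Type where
  | atom : AP → ℕ → HCTL AP
  | neg  : HCTL AP → HCTL AP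
  | or   : HCTL AP → HCTL AP → HCTL AP
  | next : HCTL AP → HCTL AP
  | untl : HCTL AP → HCTL AP → HCTL AP
  | ex   : ℕ → HCTL AP → HCTL AP

namespace HCTL

variable {AP S : Type}

/-- Path assignments: a list of (path variable, path) pairs, most recently added first. -/
abbrev PAsgn (AP S : Type) := List (ℕ × (ℕ → S × Set AP))

/-- The suffix `Π[i,∞]` of a path assignment. -/
def PAsgn.drop (Pa : PAsgn AP S) (i : ℕ) : PAsgn AP S :=
  Pa.map (fun q => (q.1, fun j => q.2 (i + j)))

/-- The state in which the most recently quantified path of the assignment starts (the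
initial state of `K` if the assignment is empty). -/
def recentState (K : Kripke AP S) : PAsgn AP S → S
  | [] => K.init
  | q :: _ => (q.2 0).1

/-- The HyperCTL* validity judgment `Π ⊨_K φ`. -/
def sat (K : Kripke AP S) : PAsgn AP S → HCTL AP → Prop
  | Pa, atom a π => ∃ p, List.lookup π Pa = some p ∧ a ∈ (p 0).2
  | Pa, neg φ => ¬ sat K Pa φ
  | Pa, or φ ψ => sat K Pa φ ∨ sat K Pa ψ
  | Pa, next φ => sat K (Pa.drop 1) φ
  | Pa, untl φ ψ => ∃ i, sat K (Pa.drop i) ψ ∧ ∀ j < i, sat K (Pa.drop j) φ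
  | Pa, ex π φ => ∃ p ∈ K.Paths (recentState K Pa), sat K ((π, p) :: Pa) φ

/-- `K ⊨ φ` iff the empty path assignment satisfies `φ`. -/
def models (K : Kripke AP S) (φ : HCTL AP) : Prop := sat K [] φ

end HCTL

/-- Reading a quantifier-free formula as a HyperCTL* formula. -/
def QF.toHCTL {AP : Type} : QF AP → HCTL AP
  | .atom a π => .atom a π
  | .neg φ => .neg φ.toHCTL
  | .or φ ψ => .or φ.toHCTL ψ.toHCTL
  | .next φ => .next φ.toHCTL
  | .untl φ ψ => .untl φ.toHCTL ψ.toHCTL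

/-- Reading a prenex HyperLTL formula as a HyperCTL* formula (`∀π.φ` becomes `¬∃π.¬φ`). -/
def Prenex.toHCTL {AP : Type} : Prenex AP → HCTL AP
  | .qf φ => φ.toHCTL
  | .ex π φ => .ex π φ.toHCTL
  | .all π φ => .neg (.ex π (.neg φ.toHCTL))

section Aux

variable {AP S : Type}

/-- The trace of a path. -/
def traceOf (p : ℕ → S × Set AP) : Trace AP := fun i => (p i).2

/-- Correspondence between a path assignment and a trace assignment. -/
def Agree (Pa : HCTL.PAsgn AP S) (Ta : QF.Asgn AP) : Prop :=
  ∀ π, (List.lookup π Pa).map traceOf = Ta π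

lemma lookup_map_snd (Pa : HCTL.PAsgn AP S)
    (f : (ℕ → S × Set AP) → (ℕ → S × Set AP)) (π : ℕ) :
    List.lookup π (Pa.map fun q => (q.1, f q.2)) = (List.lookup π Pa).map f := by
  induction Pa with
  | nil => rfl
  | cons q Pa ih =>
    simp only [List.map_cons, List.lookup]
    split <;> simp [ih]

lemma Agree.drop {Pa : HCTL.PAsgn AP S} {Ta : QF.Asgn AP} (h : Agree Pa Ta) (i : ℕ) :
    Agree (Pa.drop i) (Ta.drop i) := by
  intro π
  unfold HCTL.PAsgn.drop QF.Asgn.drop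
  rw [lookup_map_snd Pa (fun p j => p (i + j)), ← h π]
  cases List.lookup π Pa <;> rfl

lemma Agree.update {Pa : HCTL.PAsgn AP S} {Ta : QF.Asgn AP} (h : Agree Pa Ta)
    (π : ℕ) (p : ℕ → S × Set AP) :
    Agree ((π, p) :: Pa) (Ta.update π (traceOf p)) := by
  intro π'
  simp only [List.lookup, QF.Asgn.update]
  by_cases hp : π' = π
  · simp [hp]
  · have hb : (π' == π) = false := beq_false_of_ne hp
    simp [hp, hb, h π']

lemma trace_mem {K : Kripke AP S} {p} (hp : p ∈ K.Paths K.init) : traceOf p ∈ K.Traces := by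
  obtain ⟨h0, hn, hl⟩ := hp
  exact ⟨fun i => (p i).1, h0, hn, fun i => hl i⟩

lemma exists_path {K : Kripke AP S} {t} (ht : t ∈ K.Traces) :
    ∃ p ∈ K.Paths K.init, traceOf p = t := by
  obtain ⟨r, h0, hn, hl⟩ := ht
  exact ⟨fun i => (r i, t i), ⟨h0, hn, fun i => hl i⟩, rfl⟩

lemma qf_sat_iff (K : Kripke AP S) (φ : QF AP) :
    ∀ Pa Ta, Agree Pa Ta → (HCTL.sat K Pa φ.toHCTL ↔ QF.sat Ta φ) := by
  induction φ with
  | atom a π =>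
    intro Pa Ta h
    simp only [QF.toHCTL, HCTL.sat, QF.sat]
    rw [← h π]
    cases List.lookup π Pa <;> simp [traceOf]
  | neg φ ih =>
    intro Pa Ta h
    exact not_congr (ih Pa Ta h)
  | or φ ψ ihφ ihψ =>
    intro Pa Ta h
    exact or_congr (ihφ Pa Ta h) (ihψ Pa Ta h)
  | next φ ih =>
    intro Pa Ta h
    exact ih _ _ (h.drop 1)
  | untl φ ψ ihφ ihψ =>
    intro Pa Ta h
    exact exists_congr fun i =>
      and_congr (ihψ _ _ (h.drop i)) (forall_congr' fun j =>
        imp_congr Iff.rfl (ihφ _ _ (h.drop j)))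

lemma prenex_sat_iff (K : Kripke AP S) (φ : Prenex AP) :
    ∀ Pa Ta, Agree Pa Ta → HCTL.recentState K Pa = K.init →
      (HCTL.sat K Pa φ.toHCTL ↔ Prenex.sat K.Traces Ta φ) := by
  induction φ with
  | qf ψ =>
    intro Pa Ta h _
    exact qf_sat_iff K ψ Pa Ta h
  | ex π ψ ih =>
    intro Pa Ta h hr
    show (∃ p ∈ K.Paths (HCTL.recentState K Pa), HCTL.sat K ((π, p) :: Pa) ψ.toHCTL) ↔
      ∃ t ∈ K.Traces, Prenex.sat K.Traces (Ta.update π t) ψ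
    rw [hr]
    constructor
    · rintro ⟨p, hp, hs⟩
      exact ⟨traceOf p, trace_mem hp, (ih ((π, p) :: Pa) _ (h.update π p) hp.1).mp hs⟩
    · rintro ⟨t, ht, hs⟩
      obtain ⟨p, hp, hpt⟩ := exists_path ht
      subst hpt
      exact ⟨p, hp, (ih ((π, p) :: Pa) _ (h.update π p) hp.1).mpr hs⟩
  | all π ψ ih =>
    intro Pa Ta h hr
    show ¬ (∃ p ∈ K.Paths (HCTL.recentState K Pa), ¬ HCTL.sat K ((π, p) :: Pa) ψ.toHCTL) ↔
      ∀ t ∈ K.Traces, Prenex.sat K.Traces (Ta.update π t) ψ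
    rw [hr]
    push_neg
    constructor
    · intro H t ht
      obtain ⟨p, hp, hpt⟩ := exists_path ht
      have := (ih ((π, p) :: Pa) _ (h.update π p) hp.1).mp (H p hp)
      rwa [hpt] at this
    · intro H p hp
      exact (ih ((π, p) :: Pa) _ (h.update π p) hp.1).mpr (H (traceOf p) (trace_mem hp))

end Aux

/-- **HyperLTL is the prenex fragment of HyperCTL***: a closed HyperCTL* formula φ in
prenex form is satisfied in HyperCTL* by a Kripke structure K iff φ, read as a HyperLTL
formula, is satisfied in HyperLTL by the trace set Traces(K). -/
theorem prenex_hyperctlstar_iff_hyperltl (AP : Type) (φ : Prenex AP) (hc : φ.Closed)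
    (S : Type) (K : Kripke AP S) :
    HCTL.models K φ.toHCTL ↔ Prenex.satisfies K.Traces φ := by
  exact prenex_sat_iff K φ [] QF.Asgn.empty (fun _ => rfl) rfl
end

section
/- HyperCTL* is strictly more expressive than HyperLTL: for the HyperCTL* formula ∀π. ○ ∀π'. ○ (l_π ↔ l_{π'}) over an atomic proposition l, there is no closed HyperLTL formula ψ such that for every Kripke structure K (over a set of atomic propositions containing l), K satisfies ψ in HyperLTL if and only if K satisfies ∀π. ○ ∀π'. ○ (l_π ↔ l_{π'}) in HyperCTL*. -/
namespace HyperLTL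

variable {AP : Type}

/-- Free trace variables of a HyperLTL formula. -/
def free : HyperLTL AP → Set ℕ
  | atom _ π => {π}
  | neg φ => free φ
  | or φ ψ => free φ ∪ free ψ
  | next φ => free φ
  | untl φ ψ => free φ ∪ free ψ
  | ex π φ => free φ \ {π}
  | all π φ => free φ \ {π}

/-- A HyperLTL formula is closed if it has no free trace variables. -/
def Closed (φ : HyperLTL AP) : Prop := free φ = ∅

end HyperLTL

namespace HCTL

variable {AP S : Type}

/-- Derived universal path quantifier: `∀π.φ ≡ ¬∃π.¬φ`. -/
def allq (π : ℕ) (φ : HCTL AP) : HCTL AP := .neg (.ex π (.neg φ))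

/-- Derived conjunction. -/
def andf (φ ψ : HCTL AP) : HCTL AP := .neg (.or (.neg φ) (.neg ψ))

/-- Derived bi-implication `φ ↔ ψ ≡ (¬φ ∨ ψ) ∧ (¬ψ ∨ φ)`. -/
def ifff (φ ψ : HCTL AP) : HCTL AP := andf (.or (.neg φ) ψ) (.or (.neg ψ) φ)

end HCTL

/-- The HyperCTL* formula `∀π. ○ ∀π'. ○ (l_π ↔ l_{π'})` (with π = 0 and π' = 1). -/
def nestedFormula {AP : Type} (l : AP) : HCTL AP :=
  HCTL.allq 0 (.next (HCTL.allq 1 (.next (HCTL.ifff (.atom l 0) (.atom l 1)))))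

/-! ### Auxiliary counterexample construction -/

namespace HyperExpr

inductive St : Type | a | b1 | b2 | c0 | c1
  deriving DecidableEq

open St

variable {AP : Type}

/-- Labeling: only `c1` carries `l`. -/
def lab (l : AP) : St → Set AP
  | c1 => {l}
  | _ => ∅

/-- First structure: init `a` branches to `b1,b2`; `b1 → c1`, `b2 → c0`,
`c0 → c0`, `c1 → c1`. -/
def K1 (l : AP) : Kripke AP St where
  init := a
  next := fun s => match s with
    | a => {b1, b2}
    | b1 => {c1}
    | b2 => {c0}
    | c0 => {c0}
    | c1 => {c1}
  next_nonempty := by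
    intro s
    cases s
    · exact ⟨b1, Or.inl rfl⟩
    · exact ⟨c1, rfl⟩
    · exact ⟨c0, rfl⟩
    · exact ⟨c0, rfl⟩
    · exact ⟨c1, rfl⟩
  label := lab l

/-- Second structure: init `a` goes to `b1` only; `b1` branches to `c0,c1`. -/
def K2 (l : AP) : Kripke AP St where
  init := a
  next := fun s => match s with
    | a => {b1}
    | b1 => {c0, c1}
    | b2 => {c0}
    | c0 => {c0}
    | c1 => {c1}
  next_nonempty := by
    intro s
    cases s
    · exact ⟨b1, rfl⟩
    · exact ⟨c0, Or.inl rfl⟩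
    · exact ⟨c0, rfl⟩
    · exact ⟨c0, rfl⟩
    · exact ⟨c1, rfl⟩
  label := lab l

/-- The common set of traces. -/
def TT (l : AP) : Set (Trace AP) :=
  { t | t 0 = ∅ ∧ t 1 = ∅ ∧
      ((∀ n, t (n + 2) = {l}) ∨ (∀ n, t (n + 2) = (∅ : Set AP))) }

lemma traces_K1 (l : AP) : (K1 l).Traces = TT l := by
  ext t
  constructor
  · rintro ⟨r, hr0, hstep, hlab⟩
    have hr1 : r 1 ∈ ({b1, b2} : Set St) := by
      have := hstep 0; rwa [hr0] at this
    have h0 : t 0 = ∅ := by rw [hlab 0, hr0]; rfl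
    rcases hr1 with hb | hb
    · have hc : ∀ n, r (n + 2) = c1 := by
        intro n
        induction n with
        | zero => have := hstep 1; rw [hb] at this; exact this
        | succ k ih => have := hstep (k + 2); rw [ih] at this; exact this
      refine ⟨h0, ?_, Or.inl fun n => ?_⟩
      · rw [hlab 1, hb]; rfl
      · rw [hlab (n + 2), hc n]; rfl
    · have hc : ∀ n, r (n + 2) = c0 := by
        intro n
        induction n with
        | zero => have := hstep 1; rw [hb] at this; exact this
        | succ k ih => have := hstep (k + 2); rw [ih] at this; exact this
      refine ⟨h0, ?_, Or.inr fun n => ?_⟩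
      · rw [hlab 1, hb]; rfl
      · rw [hlab (n + 2), hc n]; rfl
  · rintro ⟨h0, h1, h2 | h2⟩
    · refine ⟨fun n => match n with | 0 => a | 1 => b1 | (_ + 2) => c1, rfl, ?_, ?_⟩
      · intro i
        match i with
        | 0 => exact Or.inl rfl
        | 1 => exact rfl
        | (k + 2) => exact rfl
      · intro i
        match i with
        | 0 => exact h0
        | 1 => exact h1
        | (k + 2) => exact h2 k
    · refine ⟨fun n => match n with | 0 => a | 1 => b2 | (_ + 2) => c0, rfl, ?_, ?_⟩
      · intro i
        match i with
        | 0 => exact Or.inr rfl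
        | 1 => exact rfl
        | (k + 2) => exact rfl
      · intro i
        match i with
        | 0 => exact h0
        | 1 => exact h1
        | (k + 2) => exact h2 k

lemma traces_K2 (l : AP) : (K2 l).Traces = TT l := by
  ext t
  constructor
  · rintro ⟨r, hr0, hstep, hlab⟩
    have hr1 : r 1 = b1 := by
      have := hstep 0; rwa [hr0] at this
    have h0 : t 0 = ∅ := by rw [hlab 0, hr0]; rfl
    have h1 : t 1 = ∅ := by rw [hlab 1, hr1]; rfl
    have hr2 : r 2 ∈ ({c0, c1} : Set St) := by
      have := hstep 1; rwa [hr1] at this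
    rcases hr2 with hb | hb
    · have hc : ∀ n, r (n + 2) = c0 := by
        intro n
        induction n with
        | zero => exact hb
        | succ k ih => have := hstep (k + 2); rw [ih] at this; exact this
      exact ⟨h0, h1, Or.inr fun n => by rw [hlab (n + 2), hc n]; rfl⟩
    · have hc : ∀ n, r (n + 2) = c1 := by
        intro n
        induction n with
        | zero => exact hb
        | succ k ih => have := hstep (k + 2); rw [ih] at this; exact this
      exact ⟨h0, h1, Or.inl fun n => by rw [hlab (n + 2), hc n]; rfl⟩
  · rintro ⟨h0, h1, h2 | h2⟩
    · refine ⟨fun n => match n with | 0 => a | 1 => b1 | (_ + 2) => c1, rfl, ?_, ?_⟩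
      · intro i
        match i with
        | 0 => exact rfl
        | 1 => exact Or.inr rfl
        | (k + 2) => exact rfl
      · intro i
        match i with
        | 0 => exact h0
        | 1 => exact h1
        | (k + 2) => exact h2 k
    · refine ⟨fun n => match n with | 0 => a | 1 => b1 | (_ + 2) => c0, rfl, ?_, ?_⟩
      · intro i
        match i with
        | 0 => exact rfl
        | 1 => exact Or.inl rfl
        | (k + 2) => exact rfl
      · intro i
        match i with
        | 0 => exact h0
        | 1 => exact h1
        | (k + 2) => exact h2 k

/-- Semantic characterization of the nested formula. -/
lemma models_nested {S : Type} (K : Kripke AP S) (l : AP) :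
    HCTL.models K (nestedFormula l) ↔
      ∀ p ∈ K.Paths K.init, ∀ p' ∈ K.Paths (p 1).1,
        (l ∈ (p 2).2 ↔ l ∈ (p' 1).2) := by
  simp only [nestedFormula, HCTL.models, HCTL.allq, HCTL.ifff, HCTL.andf, HCTL.sat,
    HCTL.PAsgn.drop, HCTL.recentState, List.map, List.lookup, not_exists, not_and,
    not_not, not_or]
  simp only [Nat.reduceBEq, Option.some.injEq, forall_eq', Nat.reduceAdd]
  constructor
  · intro h p hp p' hp'; have := h p hp p' hp'; tauto
  · intro h p hp p' hp'; have := h p hp p' hp'; tauto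

lemma K1_models (l : AP) : HCTL.models (K1 l) (nestedFormula l) := by
  rw [models_nested]
  rintro p ⟨hp0, hpstep, hplab⟩ p' ⟨hp'0, hp'step, hp'lab⟩
  have hp1 : (p 1).1 ∈ ({b1, b2} : Set St) := by
    have := hpstep 0; rwa [hp0] at this
  have hp2 := hpstep 1
  have hq1 := hp'step 0
  rw [hp'0] at hq1
  rw [hplab 2, hp'lab 1]
  rcases hp1 with hb | hb <;> rw [hb] at hp2 hq1
  · rw [show (p 2).1 = c1 from hp2, show (p' 1).1 = c1 from hq1]
  · rw [show (p 2).1 = c0 from hp2, show (p' 1).1 = c0 from hq1]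

lemma K2_not_models (l : AP) : ¬ HCTL.models (K2 l) (nestedFormula l) := by
  rw [models_nested]
  intro h
  let f : ℕ → St := fun n => match n with | 0 => a | 1 => b1 | (_ + 2) => c1
  let g : ℕ → St := fun n => match n with | 0 => b1 | (_ + 1) => c0
  let p : ℕ → St × Set AP := fun n => (f n, lab l (f n))
  let p' : ℕ → St × Set AP := fun n => (g n, lab l (g n))
  have hp : p ∈ (K2 l).Paths (K2 l).init := by
    refine ⟨rfl, fun i => ?_, fun i => rfl⟩
    match i with
    | 0 => exact rfl
    | 1 => exact Or.inr rfl
    | (k + 2) => exact rfl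
  have hp' : p' ∈ (K2 l).Paths (p 1).1 := by
    refine ⟨rfl, fun i => ?_, fun i => rfl⟩
    match i with
    | 0 => exact Or.inl rfl
    | (k + 1) => exact rfl
  have := (h p hp p' hp').mp rfl
  exact this

end HyperExpr

/-- **HyperCTL* is strictly more expressive than HyperLTL**: there is no closed HyperLTL
formula ψ such that for every Kripke structure K (over atomic propositions containing
`l`), K satisfies ψ in HyperLTL iff K satisfies `∀π. ○ ∀π'. ○ (l_π ↔ l_{π'})` in
HyperCTL*. -/
theorem hyperctlstar_strictly_more_expressive (AP : Type) (l : AP) :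
    ¬ ∃ ψ : HyperLTL AP, ψ.Closed ∧
      ∀ (S : Type) (K : Kripke AP S),
        HyperLTL.satisfies K.Traces ψ ↔ HCTL.models K (nestedFormula l) := by
  rintro ⟨ψ, -, h⟩
  have h1 := h HyperExpr.St (HyperExpr.K1 l)
  have h2 := h HyperExpr.St (HyperExpr.K2 l)
  rw [HyperExpr.traces_K1] at h1
  rw [HyperExpr.traces_K2] at h2
  exact HyperExpr.K2_not_models l (h2.mp (h1.mpr (HyperExpr.K1_models l)))
end

section
/- Observational determinism is a safety hyperproperty: the set OD of all trace sets T such that for all t, t' ∈ T, if t[0] and t'[0] agree on all low-input propositions then t[i] and t'[i] agree on all low-output propositions for every i ≥ 0, is a safety hyperproperty. -/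
/-- Finite traces: finite sequences of valuations. -/
abbrev FinTrace (AP : Type) := List (Set AP)

/-- Two valuations agree on a set `P` of atomic propositions. -/
def agreeOn {AP : Type} (P : Set AP) (u v : Set AP) : Prop := u ∩ P = v ∩ P

/-- A finite trace is a prefix of a trace. -/
def IsPrefixOf {AP : Type} (m : FinTrace AP) (t : Trace AP) : Prop :=
  ∀ i (h : i < m.length), m.get ⟨i, h⟩ = t i

/-- `M ≤ T`: a set `M` of finite traces is an observation of the trace set `T` if `M` is
finite and every element of `M` is a prefix of some trace in `T`. -/
def Obs {AP : Type} (M : Set (FinTrace AP)) (T : Set (Trace AP)) : Prop :=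
  M.Finite ∧ ∀ m ∈ M, ∃ t ∈ T, IsPrefixOf m t

/-- A hyperproperty `H` (a set of trace sets) is a safety hyperproperty if every trace
set not in `H` has an observation all of whose extensions are not in `H`. -/
def SafetyHP {AP : Type} (H : Set (Set (Trace AP))) : Prop :=
  ∀ T ∉ H, ∃ M, Obs M T ∧ ∀ T', Obs M T' → T' ∉ H

/-- A hyperproperty `H` is a liveness hyperproperty if every finite set of finite traces
is an observation of some trace set in `H`. -/
def LivenessHP {AP : Type} (H : Set (Set (Trace AP))) : Prop :=
  ∀ M : Set (FinTrace AP), M.Finite → ∃ T ∈ H, Obs M T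

/-- Observational determinism, with low-input propositions `LI` and low-output
propositions `LO`: any two traces that agree initially on the low inputs agree on the
low outputs at every position. -/
def OD {AP : Type} (LI LO : Set AP) : Set (Set (Trace AP)) :=
  { T | ∀ t ∈ T, ∀ t' ∈ T, agreeOn LI (t 0) (t' 0) → ∀ i, agreeOn LO (t i) (t' i) }

/-- Prefix of a trace of length `n`. -/
def pref {AP : Type} (t : Trace AP) (n : ℕ) : FinTrace AP :=
  List.ofFn (fun j : Fin n => t j)

lemma pref_isPrefixOf {AP : Type} (t : Trace AP) (n : ℕ) : IsPrefixOf (pref t n) t := by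
  intro i h
  simp [pref]

lemma pref_length {AP : Type} (t : Trace AP) (n : ℕ) : (pref t n).length = n := by
  simp [pref]

/-- **Observational determinism is a safety hyperproperty.** -/
theorem observational_determinism_safety (AP : Type) (LI LO : Set AP) :
    SafetyHP (OD LI LO) := by
  intro T hT
  simp only [OD, Set.mem_setOf_eq, not_forall] at hT
  obtain ⟨t, ht, t', ht', hli, i, hlo⟩ := hT
  refine ⟨{pref t (i+1), pref t' (i+1)}, ⟨(Set.finite_singleton _).insert _, ?_⟩, ?_⟩
  · rintro m (rfl | rfl)
    exacts [⟨t, ht, pref_isPrefixOf t _⟩, ⟨t', ht', pref_isPrefixOf t' _⟩]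
  · rintro T' ⟨-, hext⟩ hOD
    obtain ⟨s, hs, hps⟩ := hext _ (Set.mem_insert _ _)
    obtain ⟨s', hs', hps'⟩ := hext _ (Set.mem_insert_of_mem _ rfl)
    have key : ∀ j, j < i + 1 → t j = s j := fun j hj =>
      (pref_isPrefixOf t (i+1) j (by rw [pref_length]; exact hj)).symm.trans
        (hps j (by rw [pref_length]; exact hj))
    have key' : ∀ j, j < i + 1 → t' j = s' j := fun j hj =>
      (pref_isPrefixOf t' (i+1) j (by rw [pref_length]; exact hj)).symm.trans
        (hps' j (by rw [pref_length]; exact hj))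
    have h0 : agreeOn LI (s 0) (s' 0) := by
      rw [← key 0 (Nat.succ_pos _), ← key' 0 (Nat.succ_pos _)]; exact hli
    have := hOD s hs s' hs' h0 i
    rw [← key i (Nat.lt_succ_self _), ← key' i (Nat.lt_succ_self _)] at this
    exact hlo this
end

section
/- Noninference is a liveness hyperproperty: given a designated dummy condition λ on high-input propositions, the set NI of all trace sets T such that for every t ∈ T there exists t' ∈ T whose every position satisfies λ (all high inputs replaced by the dummy value) and which agrees with t on all low propositions at every position, is a liveness hyperproperty. -/
/-- Noninference, with dummy condition `lam` on valuations (all high inputs replaced by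
the dummy value) and low propositions `Low`: for every trace there is a trace in the set
all of whose positions satisfy `lam` and which agrees with it on the low propositions at
every position. -/
def Noninference {AP : Type} (lam : Set AP → Prop) (Low : Set AP) :
    Set (Set (Trace AP)) :=
  { T | ∀ t ∈ T, ∃ t' ∈ T, (∀ i, lam (t' i)) ∧ ∀ i, agreeOn Low (t i) (t' i) }

/-- **Noninference is a liveness hyperproperty**, assuming every valuation has a
λ-variant agreeing with it on the low propositions. -/
theorem noninference_liveness (AP : Type) (lam : Set AP → Prop) (Low : Set AP)
    (hlam : ∀ v : Set AP, ∃ v', lam v' ∧ agreeOn Low v v') :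
    LivenessHP (Noninference lam Low) := by
  intro M hM
  classical
  -- pointwise λ-variant
  choose g hg1 hg2 using hlam
  -- extend a finite trace to an infinite trace
  let ext : FinTrace AP → Trace AP := fun m i =>
    if h : i < m.length then m.get ⟨i, h⟩ else ∅
  let f : Trace AP → Trace AP := fun t i => g (t i)
  refine ⟨(ext '' M) ∪ (f ∘ ext) '' M, ?_, hM, ?_⟩
  · intro t ht
    rcases ht with ⟨m, hm, rfl⟩ | ⟨m, hm, rfl⟩
    · exact ⟨f (ext m), Or.inr ⟨m, hm, rfl⟩, fun i => hg1 _, fun i => hg2 _⟩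
    · exact ⟨f (ext m), Or.inr ⟨m, hm, rfl⟩, fun i => hg1 _,
        fun i => rfl⟩
  · intro m hm
    refine ⟨ext m, Or.inl ⟨m, hm, rfl⟩, fun i h => ?_⟩
    simp [ext, h]
end

section
/- Generalized noninterference is a liveness hyperproperty: the set GNI of all trace sets T such that for all t, t' ∈ T there exists t'' ∈ T that agrees with t on all high-input propositions at every position and agrees with t' on all low propositions at every position, is a liveness hyperproperty. -/
/-- Generalized noninterference, with high-input propositions `HI` and low propositions
`Low`: for all traces t, t' in the set there is a trace t'' in the set agreeing with t
on the high inputs at every position and with t' on the low propositions at every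
position. -/
def GNI {AP : Type} (HI Low : Set AP) : Set (Set (Trace AP)) :=
  { T | ∀ t ∈ T, ∀ t' ∈ T, ∃ t'' ∈ T,
      (∀ i, agreeOn HI (t'' i) (t i)) ∧ ∀ i, agreeOn Low (t'' i) (t' i) }

/-- **Generalized noninterference is a liveness hyperproperty**, where the high-input
propositions and the low propositions are disjoint. -/
theorem gni_liveness (AP : Type) (HI Low : Set AP) (hdisj : Disjoint HI Low) :
    LivenessHP (GNI HI Low) := by
  intro M hM
  refine ⟨Set.univ, ?_, hM, ?_⟩
  · intro t _ t' _
    refine ⟨fun i => (t i ∩ HI) ∪ (t' i ∩ Low), trivial, fun i => ?_, fun i => ?_⟩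
    · ext x
      simp only [agreeOn, Set.mem_inter_iff, Set.mem_union]
      constructor
      · rintro ⟨⟨h1, h2⟩ | ⟨h1, h2⟩, h3⟩
        · exact ⟨h1, h3⟩
        · exact absurd h3 (fun h => Set.disjoint_left.mp hdisj h h2)
      · exact fun ⟨h1, h2⟩ => ⟨Or.inl ⟨h1, h2⟩, h2⟩
    · ext x
      simp only [agreeOn, Set.mem_inter_iff, Set.mem_union]
      constructor
      · rintro ⟨⟨h1, h2⟩ | ⟨h1, h2⟩, h3⟩
        · exact absurd h3 (fun h => Set.disjoint_left.mp hdisj h2 h)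
        · exact ⟨h1, h3⟩
      · exact fun ⟨h1, h2⟩ => ⟨Or.inr ⟨h1, h2⟩, h2⟩
  · intro m _
    exact ⟨fun i => if h : i < m.length then m.get ⟨i, h⟩ else ∅, trivial,
      fun i h => by simp [h]⟩
end
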